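/- arXiv:2505.20761 — 4 statements merged into one kernel-verified Lean document; each statement's English description precedes it below -/
import Mathlib

section
/- Let P be a joint distribution over X × {0,1} with posterior η(x) = P(y=1 | x) and Bayes error β* = E_{x∼P_X}[min{η(x), 1−η(x)}]. Let x_1,…,x_n be i.i.d. samples from the marginal P_X, and for each i let y_i^{(1)},…,y_i^{(m)} be m hard labels drawn independently from Bernoulli(η(x_i)) given x_i, with η̂_i := (1/m)∑_{j=1}^m y_i^{(j)}. Let β̂(η̂_{1:n}) := (1/n)∑_{i=1}^n min{η̂_i, 1−η̂_i}, and define L_Err(q) := q(1−q)/|2q−1| for q ≠ 1/2 and L_Err(1/2) := +∞. Then −E_{x∼P_X}[min{L_Err(η(x))/m, √(π/(2m))}] ≤ E[β̂(η̂_{1:n})] − β* ≤ 0. -/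
/-!
Given `x`, the estimate `η̂` is the mean of `m` independent Bernoulli(`p`) labels, `p = η x`, so
it has mean `p` and variance `p(1-p)/m`; averaging over the i.i.d. instances, the bias is
`E_x[E min(η̂, 1 - η̂) - min(p, 1 - p)]`. As `t ↦ min(t, 1 - t)` is concave, the bias is
nonpositive. Writing `min(t, 1 - t) = 1/2 - |t - 1/2|`, the lower bound amounts to
`E|Y| ≤ |c| + min(Var Y / (2|c|), a)` for `Y = η̂ - 1/2`, `c = p - 1/2` and `a = √(π/(2m))`.
The first term comes from integrating `|y| ≤ y + (y - c)² / (2c)` (for `c > 0`, then `-Y`), the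
second from `|y| ≤ |c| + |y - c|` and AM-GM `|d| ≤ d² / (2a) + a/2`, using `Var Y ≤ 1/(4m) ≤ a²`.
-/

open MeasureTheory ProbabilityTheory
open scoped NNReal

set_option linter.deprecated false

lemma abs_le_add_sq_sub_div {c : ℝ} (hc : 0 < c) (y : ℝ) : |y| ≤ y + (y - c) ^ 2 / (2 * c) := by
  rcases le_total 0 y with hy | hy
  · rw [abs_of_nonneg hy]
    have : 0 ≤ (y - c) ^ 2 / (2 * c) := by positivity
    linarith
  · rw [abs_of_nonpos hy]
    have : -2 * y * (2 * c) ≤ (y - c) ^ 2 := by nlinarith [sq_nonneg (y + c)]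
    linarith [(le_div_iff₀ (by positivity : (0 : ℝ) < 2 * c)).mpr this]

lemma abs_le_sq_div_add {a : ℝ} (ha : 0 < a) (d : ℝ) : |d| ≤ d ^ 2 / (2 * a) + a / 2 := by
  have : |d| * (2 * a) ≤ d ^ 2 + a ^ 2 := by nlinarith [sq_nonneg (|d| - a), sq_abs d]
  calc |d| ≤ (d ^ 2 + a ^ 2) / (2 * a) := (le_div_iff₀ (by positivity)).mpr this
    _ = d ^ 2 / (2 * a) + a / 2 := by field_simp

lemma min_one_sub_eq_half_sub_abs (t : ℝ) : min t (1 - t) = 1 / 2 - |t - 1 / 2| := by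
  rcases le_total t (1 / 2) with h | h
  · rw [min_eq_left (by linarith), abs_of_nonpos (by linarith)]; ring
  · rw [min_eq_right (by linarith), abs_of_nonneg (by linarith)]; ring

lemma integral_sq_sub_integral_div {Ω : Type*} [MeasurableSpace Ω] {ν : Measure Ω} {Y : Ω → ℝ}
    (hY : MemLp Y 2 ν) (c : ℝ) :
    ∫ ω, (Y ω - ν[Y]) ^ 2 / c ∂ν = Var[Y; ν] / c := by
  rw [integral_div, variance_eq_integral hY.aemeasurable]

section Deviation

variable {Ω : Type*} [MeasurableSpace Ω] {ν : Measure Ω} [IsProbabilityMeasure ν] {Y : Ω → ℝ}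

lemma integral_abs_le_of_integral_pos (hY : MemLp Y 2 ν) (h : 0 < ν[Y]) :
    ∫ ω, |Y ω| ∂ν ≤ ν[Y] + Var[Y; ν] / (2 * ν[Y]) := by
  have hsq : Integrable (fun ω => (Y ω - ν[Y]) ^ 2 / (2 * ν[Y])) ν :=
    ((hY.sub (memLp_const _)).integrable_sq).div_const _
  calc ∫ ω, |Y ω| ∂ν ≤ ∫ ω, (Y ω + (Y ω - ν[Y]) ^ 2 / (2 * ν[Y])) ∂ν :=
        integral_mono (hY.integrable one_le_two).abs ((hY.integrable one_le_two).add hsq)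
          fun ω => abs_le_add_sq_sub_div h (Y ω)
    _ = ν[Y] + Var[Y; ν] / (2 * ν[Y]) := by
        rw [integral_add (hY.integrable one_le_two) hsq, integral_sq_sub_integral_div hY]

lemma integral_abs_le_abs_integral_add_variance_div (hY : MemLp Y 2 ν) (h : ν[Y] ≠ 0) :
    ∫ ω, |Y ω| ∂ν ≤ |ν[Y]| + Var[Y; ν] / (2 * |ν[Y]|) := by
  rcases h.lt_or_gt with hneg | hpos
  · have hY' := integral_abs_le_of_integral_pos hY.neg (by rwa [integral_neg', neg_pos])
    simp only [Pi.neg_apply, abs_neg, integral_neg, variance_neg] at hY'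
    rwa [abs_of_neg hneg]
  · rw [abs_of_pos hpos]
    exact integral_abs_le_of_integral_pos hY hpos

lemma integral_abs_le_abs_integral_add_of_variance_le (hY : MemLp Y 2 ν) {a : ℝ} (ha : 0 < a)
    (h : Var[Y; ν] ≤ a ^ 2) :
    ∫ ω, |Y ω| ∂ν ≤ |ν[Y]| + a := by
  have hsq : Integrable (fun ω => (Y ω - ν[Y]) ^ 2 / (2 * a)) ν :=
    ((hY.sub (memLp_const _)).integrable_sq).div_const _
  have hpoint (ω : Ω) : |Y ω| ≤ (Y ω - ν[Y]) ^ 2 / (2 * a) + (|ν[Y]| + a / 2) := by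
    have := abs_le_sq_div_add ha (Y ω - ν[Y])
    have := abs_sub_abs_le_abs_sub (Y ω) ν[Y]
    linarith
  have hVa : Var[Y; ν] / (2 * a) ≤ a / 2 := by
    rw [div_le_iff₀ (by positivity)]; nlinarith
  calc ∫ ω, |Y ω| ∂ν ≤ ∫ ω, ((Y ω - ν[Y]) ^ 2 / (2 * a) + (|ν[Y]| + a / 2)) ∂ν :=
        integral_mono (hY.integrable one_le_two).abs (hsq.add (integrable_const _)) hpoint
    _ = Var[Y; ν] / (2 * a) + (|ν[Y]| + a / 2) := by
        rw [integral_add hsq (integrable_const _), integral_sq_sub_integral_div hY]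
        simp
    _ ≤ |ν[Y]| + a := by linarith

variable {g : Ω → ℝ}

lemma integral_min_one_sub_le (hg : Integrable g ν) :
    ∫ ω, min (g ω) (1 - g ω) ∂ν ≤ min ν[g] (1 - ν[g]) := by
  have hmin : Integrable (fun ω => min (g ω) (1 - g ω)) ν := hg.inf ((integrable_const 1).sub hg)
  refine le_min (integral_mono hmin hg fun ω => min_le_left _ _) ?_
  calc ∫ ω, min (g ω) (1 - g ω) ∂ν ≤ ∫ ω, (1 - g ω) ∂ν :=
        integral_mono hmin ((integrable_const 1).sub hg) fun ω => min_le_right _ _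
    _ = 1 - ν[g] := by rw [integral_sub (integrable_const 1) hg]; simp

lemma sub_le_integral_min_one_sub (hg : MemLp g 2 ν) {a : ℝ} (ha : 0 < a)
    (hV : Var[g; ν] ≤ a ^ 2) :
    min ν[g] (1 - ν[g]) - min (if ν[g] = 1 / 2 then a else Var[g; ν] / |2 * ν[g] - 1|) a
      ≤ ∫ ω, min (g ω) (1 - g ω) ∂ν := by
  set Y : Ω → ℝ := fun ω => g ω - 1 / 2
  have hY : MemLp Y 2 ν := hg.sub (memLp_const _)
  have hmean : ν[Y] = ν[g] - 1 / 2 := by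
    rw [integral_sub (hg.integrable one_le_two) (integrable_const _)]; simp
  have hvar : Var[Y; ν] = Var[g; ν] := variance_sub_const hg.aestronglyMeasurable _
  have hmin : ∫ ω, min (g ω) (1 - g ω) ∂ν = 1 / 2 - ∫ ω, |Y ω| ∂ν := by
    simp_rw [min_one_sub_eq_half_sub_abs]
    rw [integral_sub (integrable_const _) (hY.integrable one_le_two).abs]; simp
  have hsmall := integral_abs_le_abs_integral_add_of_variance_le hY ha (hvar ▸ hV)
  rw [hmean] at hsmall
  rw [hmin, min_one_sub_eq_half_sub_abs]
  suffices ∫ ω, |Y ω| ∂ν - |ν[g] - 1 / 2|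
      ≤ min (if ν[g] = 1 / 2 then a else Var[g; ν] / |2 * ν[g] - 1|) a by linarith
  split_ifs with hhalf
  · rw [min_self]; linarith
  · have hlarge := integral_abs_le_abs_integral_add_variance_div hY
      (by rw [hmean]; exact sub_ne_zero.mpr hhalf)
    have htwice : 2 * |ν[g] - 1 / 2| = |2 * ν[g] - 1| := by
      rw [← abs_two, ← abs_mul, abs_two]; ring_nf
    rw [hmean, hvar, htwice] at hlarge
    exact le_min (by linarith) (by linarith)

end Deviation

lemma integral_sum_comp_eval {ι : Type*} [Fintype ι] {E : Type*} [MeasurableSpace E]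
    {Q : Measure E} [IsProbabilityMeasure Q] {f : E → ℝ} (hf : Integrable f Q) :
    ∫ ω, ∑ i, f (ω i) ∂(Measure.pi fun _ : ι => Q) = Fintype.card ι * ∫ z, f z ∂Q := by
  rw [integral_finsetSum _ fun i _ => integrable_comp_eval hf]
  simp_rw [integral_comp_eval (μ := fun _ => Q) hf.aestronglyMeasurable]
  simp

noncomputable def empiricalMean {m : ℕ} (y : Fin m → Bool) : ℝ :=
  (∑ j, if y j then (1 : ℝ) else 0) / m

section Bernoulli

variable {q : ℝ≥0} (hq : q ≤ 1) {m : ℕ}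

lemma integral_ite_bernoulli :
    ∫ b, (if b then (1 : ℝ) else 0) ∂(PMF.bernoulli q hq).toMeasure = q := by
  simp [PMF.integral_eq_sum, PMF.bernoulli_apply]

lemma variance_ite_bernoulli :
    Var[fun b => if b then (1 : ℝ) else 0; (PMF.bernoulli q hq).toMeasure] = q * (1 - q) := by
  rw [variance_eq_sub MemLp.of_discrete]
  simp [PMF.integral_eq_sum, PMF.bernoulli_apply]
  ring

lemma integral_empiricalMean (hm : 0 < m) :
    ∫ y, empiricalMean y ∂(Measure.pi fun _ : Fin m => (PMF.bernoulli q hq).toMeasure) = q := by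
  have hsum := integral_sum_comp_eval (ι := Fin m) (Q := (PMF.bernoulli q hq).toMeasure)
    (f := fun b => if b then (1 : ℝ) else 0) .of_finite
  simp only [empiricalMean]
  rw [integral_div, hsum, integral_ite_bernoulli, Fintype.card_fin]
  field_simp

lemma variance_empiricalMean :
    Var[empiricalMean; Measure.pi fun _ : Fin m => (PMF.bernoulli q hq).toMeasure]
      = q * (1 - q) / m := by
  have hmean : (empiricalMean : (Fin m → Bool) → ℝ) = fun y =>
      (m : ℝ)⁻¹ * (∑ j : Fin m, fun y : Fin m → Bool => if y j then (1 : ℝ) else 0) y := by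
    ext y; simp [empiricalMean, div_eq_inv_mul]
  have hsum := variance_sum_pi (μ := fun _ : Fin m => (PMF.bernoulli q hq).toMeasure)
    (X := fun _ b => if b then (1 : ℝ) else 0) fun _ => MemLp.of_discrete
  rw [hmean, variance_const_mul, hsum]
  simp [variance_ite_bernoulli]
  field_simp

lemma integral_min_empiricalMean_le (hm : 0 < m) :
    ∫ y, min (empiricalMean y) (1 - empiricalMean y)
        ∂(Measure.pi fun _ : Fin m => (PMF.bernoulli q hq).toMeasure) ≤ min (q : ℝ) (1 - q) := by
  simpa only [integral_empiricalMean hq hm] using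
    integral_min_one_sub_le (ν := Measure.pi fun _ : Fin m => (PMF.bernoulli q hq).toMeasure)
      (g := empiricalMean) .of_finite

lemma sub_le_integral_min_empiricalMean (hm : 0 < m) :
    min (q : ℝ) (1 - q)
        - min (if (q : ℝ) = 1 / 2 then √(Real.pi / (2 * m))
            else q * (1 - q) / |2 * (q : ℝ) - 1| / m) √(Real.pi / (2 * m))
      ≤ ∫ y, min (empiricalMean y) (1 - empiricalMean y)
          ∂(Measure.pi fun _ : Fin m => (PMF.bernoulli q hq).toMeasure) := by
  have hvar : Var[empiricalMean; Measure.pi fun _ : Fin m => (PMF.bernoulli q hq).toMeasure]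
      ≤ √(Real.pi / (2 * m)) ^ 2 := by
    rw [variance_empiricalMean, Real.sq_sqrt (by positivity), div_mul_eq_div_div]
    gcongr
    nlinarith [Real.pi_gt_three, sq_nonneg ((q : ℝ) - 1 / 2)]
  have h := sub_le_integral_min_one_sub MemLp.of_discrete (by positivity) hvar
  rwa [integral_empiricalMean hq hm, variance_empiricalMean, div_right_comm] at h

end Bernoulli

lemma integrable_min_one_sub_of_mem_Icc {α : Type*} [MeasurableSpace α] {μ : Measure α}
    [IsFiniteMeasure μ] {f : α → ℝ} (hf : Measurable f) (h01 : ∀ x, f x ∈ Set.Icc (0 : ℝ) 1) :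
    Integrable (fun x => min (f x) (1 - f x)) μ := by
  refine .of_bound (hf.min (measurable_const.sub hf)).aestronglyMeasurable 1
    (ae_of_all _ fun x => ?_)
  obtain ⟨h0, h1⟩ := h01 x
  rw [Real.norm_eq_abs, abs_le]
  exact ⟨le_min (by linarith) (by linarith), (min_le_left _ _).trans h1⟩

lemma neg_integral_le_integral_sub_integral_and_nonpos {α : Type*} [MeasurableSpace α]
    {μ : Measure α} [IsFiniteMeasure μ] {f c b : α → ℝ} {a : ℝ} (hf : Integrable f μ)
    (hc : Integrable c μ) (hb : AEStronglyMeasurable b μ) (hba : ∀ x, b x ≤ a)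
    (hlow : ∀ x, c x - b x ≤ f x) (hup : ∀ x, f x ≤ c x) :
    -∫ x, b x ∂μ ≤ ∫ x, f x ∂μ - ∫ x, c x ∂μ ∧ ∫ x, f x ∂μ - ∫ x, c x ∂μ ≤ 0 := by
  have hb_int : Integrable b μ := .of_bound hb a (ae_of_all _ fun x => by
    rw [Real.norm_eq_abs, abs_of_nonneg (by linarith [hlow x, hup x])]
    exact hba x)
  rw [← integral_sub hf hc, ← integral_neg]
  exact ⟨integral_mono hb_int.neg (hf.sub hc) fun x => by linarith [hlow x],
    integral_nonpos fun x => sub_nonpos.2 (hup x)⟩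

theorem bias_bound_hard_label_estimator
    {X : Type*} [MeasurableSpace X]
    (μ : Measure X) [IsProbabilityMeasure μ]
    (η : X → ℝ) (hη : Measurable η)
    (hη01 : ∀ x, η x ∈ Set.Icc (0 : ℝ) 1)
    (n m : ℕ) (hn : 0 < n) (hm : 0 < m)
    (κ : Kernel X (Fin m → Bool)) [IsMarkovKernel κ]
    (hκ : ∀ x, κ x = Measure.pi fun _ : Fin m =>
      (PMF.bernoulli (Real.toNNReal (η x))
        (Real.toNNReal_le_one.mpr (hη01 x).2)).toMeasure) :
    let P : Measure (Fin n → X × (Fin m → Bool)) :=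
      (Measure.pi fun _ : Fin n => μ.compProd κ);
    let etaHat : (Fin n → X × (Fin m → Bool)) → Fin n → ℝ :=
      (fun ω i => (∑ j : Fin m, if (ω i).2 j then (1 : ℝ) else 0) / m);
    let betaHat : (Fin n → X × (Fin m → Bool)) → ℝ :=
      (fun ω => (∑ i : Fin n, min (etaHat ω i) (1 - etaHat ω i)) / n);
    let bayes : ℝ := (∫ x, min (η x) (1 - η x) ∂μ);
    -(∫ x, min
        (if η x = 1 / 2 then Real.sqrt (Real.pi / (2 * (m : ℝ)))
          else η x * (1 - η x) / |2 * η x - 1| / m)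
        (Real.sqrt (Real.pi / (2 * (m : ℝ)))) ∂μ)
      ≤ (∫ ω, betaHat ω ∂P) - bayes ∧
    (∫ ω, betaHat ω ∂P) - bayes ≤ 0 := by
  intro P etaHat betaHat bayes
  set φ : (Fin m → Bool) → ℝ := fun y => min (empiricalMean y) (1 - empiricalMean y)
  set bound : X → ℝ := fun x => min
    (if η x = 1 / 2 then √(Real.pi / (2 * m)) else η x * (1 - η x) / |2 * η x - 1| / m)
    √(Real.pi / (2 * m))
  have hφ : Integrable (fun z : X × (Fin m → Bool) => φ z.2) (μ.compProd κ) :=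
    (Integrable.of_finite (f := φ)).comp_measurable measurable_snd
  have hbeta : ∫ ω, betaHat ω ∂P = ∫ x, ∫ y, φ y ∂κ x ∂μ := by
    change ∫ ω, (∑ i, φ (ω i).2) / n ∂P = _
    rw [integral_div, integral_sum_comp_eval hφ, Measure.integral_compProd hφ, Fintype.card_fin]
    field_simp
  have hI : Integrable (fun x => ∫ y, φ y ∂κ x) μ := by
    rw [Measure.compProd] at hφ
    simpa using hφ.integral_compProd
  have hbound : Measurable bound :=
    (Measurable.ite (hη (measurableSet_singleton _)) measurable_const (by fun_prop)).min
      measurable_const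
  have hpoint (x : X) : ∫ y, φ y ∂κ x ≤ min (η x) (1 - η x)
      ∧ min (η x) (1 - η x) - bound x ≤ ∫ y, φ y ∂κ x := by
    have hq := Real.toNNReal_le_one.mpr (hη01 x).2
    have hupper := integral_min_empiricalMean_le hq hm
    have hlower := sub_le_integral_min_empiricalMean hq hm
    rw [Real.coe_toNNReal _ (hη01 x).1] at hupper hlower
    rw [hκ x]
    exact ⟨hupper, hlower⟩
  rw [hbeta]
  exact neg_integral_le_integral_sub_integral_and_nonpos hI
    (integrable_min_one_sub_of_mem_Icc hη hη01) hbound.aestronglyMeasurable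
    (fun x => min_le_right _ _) (fun x => (hpoint x).2) (fun x => (hpoint x).1)
end

section
/- For all integers n ≥ 1 and m ≥ 1, the inequality √(π/(2m)) ≤ 1/(2√m) + √(log(2n√m)/m) holds; equivalently, the condition n√m ≥ (1/2)·exp(((√(2π) − 1)/2)²) is satisfied for all n, m ≥ 1. Consequently, the bias bound −√(π/(2m)) ≤ E[β̂(η̂_{1:n})] − β* ≤ 0 is tighter than the bound |E[β̂(η̂_{1:n})] − β*| ≤ 1/(2√m) + √(log(2n√m)/m) for all n, m ≥ 1. -/
/-! Put `κ = (√(2π) - 1) / 2`, so that `√(π / (2m)) = (1 + 2κ) / (2√m) = 1 / (2√m) + √(κ² / m)`.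
The bound `√(π / (2m)) ≤ 1 / (2√m) + √(log (2x) / m)` therefore reduces to `κ² ≤ log (2x)`, i.e.
`exp (κ²) / 2 ≤ x`. Numerically `κ ≤ 0.755`, so `κ² < 0.58 < log 2`, and the condition holds as soon
as `x = n√m ≥ 1`. -/

open Real

local notation "κ" => (√(2 * π) - 1) / 2

lemma one_le_sqrt_two_mul_pi : 1 ≤ √(2 * π) :=
  one_le_sqrt.mpr (by linarith [pi_gt_three])

lemma sqrt_two_mul_pi_le : √(2 * π) ≤ 2.51 :=
  sqrt_le_iff.mpr ⟨by norm_num, by linarith [pi_lt_d2]⟩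

lemma sq_kappa_le_log_two : κ ^ 2 ≤ log 2 := by
  have hκ₀ : 0 ≤ κ := by linarith [one_le_sqrt_two_mul_pi]
  have hκ₁ : κ ≤ 0.755 := by linarith [sqrt_two_mul_pi_le]
  nlinarith [log_two_gt_d9]

lemma half_mul_exp_sq_kappa_le {x : ℝ} (hx : 1 ≤ x) : 1 / 2 * exp (κ ^ 2) ≤ x := by
  have : exp (κ ^ 2) ≤ 2 := (exp_le_exp.mpr sq_kappa_le_log_two).trans_eq (exp_log two_pos)
  linarith

lemma sqrt_pi_div_two_mul_eq {m : ℝ} (hm : 0 < m) :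
    √(π / (2 * m)) = 1 / (2 * √m) + √(κ ^ 2 / m) := by
  have hsm : 0 < √m := sqrt_pos.mpr hm
  have hsplit : √(π / (2 * m)) = √(2 * π) / (2 * √m) := by
    rw [show π / (2 * m) = 2 * π / (2 * √m) ^ 2 by rw [mul_pow, sq_sqrt hm.le]; ring,
      sqrt_div' _ (sq_nonneg _), sqrt_sq (by positivity)]
  rw [hsplit, sqrt_div' _ hm.le, sqrt_sq (by linarith [one_le_sqrt_two_mul_pi])]
  field_simp
  ring

lemma sqrt_pi_div_two_mul_le {m x : ℝ} (hm : 0 < m) (hx : 1 / 2 * exp (κ ^ 2) ≤ x) :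
    √(π / (2 * m)) ≤ 1 / (2 * √m) + √(log (2 * x) / m) := by
  have hlog : κ ^ 2 ≤ log (2 * x) :=
    (le_log_iff_exp_le (by linarith [exp_pos (κ ^ 2)])).mpr (by linarith)
  rw [sqrt_pi_div_two_mul_eq hm]
  gcongr

theorem new_bias_bound_tighter_than_existing :
    ∀ n m : ℕ, 1 ≤ n → 1 ≤ m →
      (Real.sqrt (Real.pi / (2 * (m : ℝ))) ≤
        1 / (2 * Real.sqrt (m : ℝ)) +
          Real.sqrt (Real.log (2 * (n : ℝ) * Real.sqrt (m : ℝ)) / (m : ℝ))) ∧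
      ((1 / 2 : ℝ) * Real.exp (((Real.sqrt (2 * Real.pi) - 1) / 2) ^ 2) ≤
        (n : ℝ) * Real.sqrt (m : ℝ)) ∧
      (∀ b : ℝ, -Real.sqrt (Real.pi / (2 * (m : ℝ))) ≤ b → b ≤ 0 →
        |b| ≤ 1 / (2 * Real.sqrt (m : ℝ)) +
          Real.sqrt (Real.log (2 * (n : ℝ) * Real.sqrt (m : ℝ)) / (m : ℝ))) := by
  intro n m hn hm
  have hm₀ : (0 : ℝ) < m := by exact_mod_cast hm
  have hns : 1 ≤ (n : ℝ) * √m :=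
    one_le_mul_of_one_le_of_one_le (by exact_mod_cast hn) (one_le_sqrt.mpr (by exact_mod_cast hm))
  have hcond := half_mul_exp_sq_kappa_le hns
  have hbound := sqrt_pi_div_two_mul_le hm₀ hcond
  rw [← mul_assoc] at hbound
  refine ⟨hbound, hcond, fun b hb hb₀ => ?_⟩
  rw [abs_of_nonpos hb₀]
  linarith
end

section
/- Let p ∈ [0,1] and let p̂ = (1/m)∑_{j=1}^m Z^{(j)}, where Z^{(1)},…,Z^{(m)} are independent Bernoulli random variables with mean p. Define φ_Err(z) := min{z, 1−z} for z ∈ [0,1]. Then −√(π/(2m)) ≤ E[φ_Err(p̂)] − φ_Err(p) ≤ 0. Furthermore, if p ≠ 1/2, then −p(1−p)/(m·|2p−1|) ≤ E[φ_Err(p̂)] − φ_Err(p) ≤ 0. -/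
/-!
Write `φ z = min z (1 - z)`. Since `φ z ≤ z` and `φ z ≤ 1 - z`, integrating gives
`E φ(p̂) ≤ φ(p)`. As `φ` is 1-Lipschitz, the gap is at least
`-E|p̂ - p| ≥ -√(Var p̂) = -√(p(1-p)/m)`, and `p(1-p) ≤ 1/4 < π/2`. For `p ≠ 1/2`, `φ` lies
above the parabola `φ(p) - sgn(2p-1) (z - p) - (z - p)² / |2p-1|`, whose expectation is
`φ(p) - Var p̂ / |2p-1|`.
-/

open MeasureTheory ProbabilityTheory

lemma min_one_sub_sub_abs_sub_le (p z : ℝ) : min p (1 - p) - |z - p| ≤ min z (1 - z) := by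
  have h := abs_min_sub_min_le_max p (1 - p) z (1 - z)
  rw [show 1 - p - (1 - z) = -(p - z) by ring, abs_neg, max_self, abs_sub_comm p] at h
  linarith [le_abs_self (min p (1 - p) - min z (1 - z))]

lemma abs_two_mul_sub_one_mul_min_one_sub_le (p z : ℝ) :
    |2 * p - 1| * min p (1 - p) - (2 * p - 1) * (z - p) - (z - p) ^ 2
      ≤ |2 * p - 1| * min z (1 - z) := by
  rcases le_total p (1 - p) with hp | hp <;> rcases le_total z (1 - z) with hz | hz <;>
    simp only [min_eq_left, min_eq_right, hp, hz] <;>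
    rcases abs_cases (2 * p - 1) with ⟨ha, ha'⟩ | ⟨ha, ha'⟩ <;> rw [ha] <;>
    nlinarith [sq_nonneg (z - p), sq_nonneg (z + p - 1)]

section

variable {Ω : Type*} [MeasurableSpace Ω] {μ : Measure Ω} [IsProbabilityMeasure μ] {Y : Ω → ℝ}

lemma integrable_min_one_sub (hY : Integrable Y μ) :
    Integrable (fun ω => min (Y ω) (1 - Y ω)) μ :=
  hY.inf ((integrable_const 1).sub hY)

lemma integral_abs_sub_integral_le_sqrt_variance (hY : MemLp Y 2 μ) :
    ∫ ω, |Y ω - μ[Y]| ∂μ ≤ √(Var[Y; μ]) := by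
  have hZ : MemLp (fun ω => |Y ω - μ[Y]|) 2 μ := (hY.sub (memLp_const (∫ ω, Y ω ∂μ))).abs
  have h := variance_nonneg (fun ω => |Y ω - μ[Y]|) μ
  rw [variance_eq_sub hZ] at h
  rw [variance_eq_integral hY.aemeasurable]
  apply Real.le_sqrt_of_sq_le
  simpa [sq_abs] using h

lemma integral_min_one_sub_le_s7 (hY : Integrable Y μ) :
    ∫ ω, min (Y ω) (1 - Y ω) ∂μ ≤ min μ[Y] (1 - μ[Y]) := by
  have h1 : Integrable (fun ω => 1 - Y ω) μ := (integrable_const 1).sub hY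
  refine le_min (integral_mono (integrable_min_one_sub hY) hY fun ω => min_le_left _ _) ?_
  calc ∫ ω, min (Y ω) (1 - Y ω) ∂μ ≤ ∫ ω, 1 - Y ω ∂μ :=
        integral_mono (integrable_min_one_sub hY) h1 fun ω => min_le_right _ _
    _ = 1 - μ[Y] := by rw [integral_sub (integrable_const 1) hY, integral_const]; simp

lemma sub_sqrt_variance_le_integral_min_one_sub (hY : MemLp Y 2 μ) :
    min μ[Y] (1 - μ[Y]) - √(Var[Y; μ]) ≤ ∫ ω, min (Y ω) (1 - Y ω) ∂μ := by
  have hYi : Integrable Y μ := hY.integrable one_le_two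
  have hdev : Integrable (fun ω => |Y ω - μ[Y]|) μ := (hYi.sub (integrable_const _)).abs
  calc min μ[Y] (1 - μ[Y]) - √(Var[Y; μ])
      ≤ min μ[Y] (1 - μ[Y]) - ∫ ω, |Y ω - μ[Y]| ∂μ := by
        gcongr; exact integral_abs_sub_integral_le_sqrt_variance hY
    _ = ∫ ω, (min μ[Y] (1 - μ[Y]) - |Y ω - μ[Y]|) ∂μ := by
        rw [integral_sub (integrable_const _) hdev, integral_const]; simp
    _ ≤ ∫ ω, min (Y ω) (1 - Y ω) ∂μ :=
        integral_mono ((integrable_const _).sub hdev) (integrable_min_one_sub hYi)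
          fun ω => min_one_sub_sub_abs_sub_le _ _

lemma sub_variance_div_le_integral_min_one_sub (hY : MemLp Y 2 μ) (hmean : μ[Y] ≠ 1 / 2) :
    min μ[Y] (1 - μ[Y]) - Var[Y; μ] / |2 * μ[Y] - 1| ≤ ∫ ω, min (Y ω) (1 - Y ω) ∂μ := by
  set p := μ[Y] with hp
  have ha : 0 < |2 * p - 1| := abs_pos.mpr fun h => hmean (by linarith)
  have hYi : Integrable Y μ := hY.integrable one_le_two
  have hdev : Integrable (fun ω => Y ω - p) μ := hYi.sub (integrable_const _)
  have hsq : Integrable (fun ω => (Y ω - p) ^ 2) μ := (hY.sub (memLp_const p)).integrable_sq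
  have hlin : Integrable (fun ω => |2 * p - 1| * min p (1 - p) - (2 * p - 1) * (Y ω - p)) μ :=
    (integrable_const _).sub (hdev.const_mul _)
  have hscaled :
      |2 * p - 1| * min p (1 - p) - Var[Y; μ] ≤ |2 * p - 1| * ∫ ω, min (Y ω) (1 - Y ω) ∂μ :=
    calc |2 * p - 1| * min p (1 - p) - Var[Y; μ]
        = ∫ ω, (|2 * p - 1| * min p (1 - p) - (2 * p - 1) * (Y ω - p) - (Y ω - p) ^ 2) ∂μ := by
          have hcentered : ∫ ω, (2 * p - 1) * (Y ω - p) ∂μ = 0 := by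
            rw [integral_const_mul, integral_sub hYi (integrable_const _)]
            simp [← hp]
          rw [integral_sub hlin hsq, integral_sub (integrable_const _) (hdev.const_mul _),
            hcentered, integral_const, variance_eq_integral hY.aemeasurable, ← hp]
          simp
        _ ≤ ∫ ω, |2 * p - 1| * min (Y ω) (1 - Y ω) ∂μ :=
          integral_mono (hlin.sub hsq) ((integrable_min_one_sub hYi).const_mul _) fun ω =>
            abs_two_mul_sub_one_mul_min_one_sub_le _ _
        _ = |2 * p - 1| * ∫ ω, min (Y ω) (1 - Y ω) ∂μ := integral_const_mul _ _
  rw [sub_le_iff_le_add, ← sub_le_iff_le_add', le_div_iff₀ ha]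
  linarith [hscaled]

end

noncomputable def sampleMean {α : Type*} {m : ℕ} (X : α → ℝ) (ω : Fin m → α) : ℝ :=
  (∑ j, X (ω j)) / m

section

variable {α : Type*} [MeasurableSpace α] {ν : Measure α} [IsProbabilityMeasure ν] {X : α → ℝ}

lemma integral_sampleMean (hX : Integrable X ν) {m : ℕ} (hm : m ≠ 0) :
    ∫ ω, sampleMean X ω ∂(Measure.pi fun _ : Fin m => ν) = ν[X] := by
  unfold sampleMean
  have heval (j : Fin m) : ∫ ω, X (ω j) ∂(Measure.pi fun _ : Fin m => ν) = ν[X] :=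
    integral_comp_eval (μ := fun _ => ν) hX.aestronglyMeasurable
  rw [integral_div, integral_finsetSum _ fun j _ => integrable_comp_eval hX]
  simp [heval, hm]

lemma variance_sampleMean (hX : MemLp X 2 ν) (m : ℕ) :
    Var[sampleMean X; Measure.pi fun _ : Fin m => ν] = Var[X; ν] / m := by
  have hsampleMean :
      sampleMean X = fun ω : Fin m → α => (m : ℝ)⁻¹ * (∑ j, fun ω => X (ω j)) ω := by
    ext ω; simp [sampleMean, div_eq_inv_mul]
  rw [hsampleMean, variance_const_mul, variance_sum_pi fun _ => hX]
  simp only [Finset.sum_const, Finset.card_univ, Fintype.card_fin, nsmul_eq_mul]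
  rcases eq_or_ne (m : ℝ) 0 with hm | hm
  · simp [hm]
  · field_simp

end

lemma PMF.integral_bernoulli_toMeasure {q : NNReal} (hq : q ≤ 1) (f : Bool → ℝ) :
    ∫ b, f b ∂(PMF.bernoulli q hq).toMeasure = q * f true + (1 - q) * f false := by
  simp [PMF.integral_eq_sum, PMF.bernoulli_apply, NNReal.coe_sub hq]

lemma PMF.integral_bernoulli_indicator {q : NNReal} (hq : q ≤ 1) :
    ∫ b, (if b then (1 : ℝ) else 0) ∂(PMF.bernoulli q hq).toMeasure = q := by
  simp [PMF.integral_bernoulli_toMeasure]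

lemma PMF.variance_bernoulli_indicator {q : NNReal} (hq : q ≤ 1) :
    Var[fun b => if b then (1 : ℝ) else 0; (PMF.bernoulli q hq).toMeasure] = q * (1 - q) := by
  rw [variance_eq_integral (Measurable.of_discrete.aemeasurable), PMF.integral_bernoulli_indicator,
    PMF.integral_bernoulli_toMeasure]
  simp only [↓reduceIte, Bool.false_eq_true]
  ring

theorem jensen_gap_pointwise_bayes_error
    (p : ℝ) (hp : p ∈ Set.Icc (0 : ℝ) 1) (m : ℕ) (hm : 0 < m) :
    let P : Measure (Fin m → Bool) :=
      (Measure.pi fun _ : Fin m =>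
        (PMF.bernoulli (Real.toNNReal p) (Real.toNNReal_le_one.mpr hp.2)).toMeasure);
    let phiErr : ℝ → ℝ := (fun z => min z (1 - z));
    let phat : (Fin m → Bool) → ℝ :=
      (fun ω => (∑ j : Fin m, if ω j then (1 : ℝ) else 0) / m);
    (-Real.sqrt (Real.pi / (2 * (m : ℝ))) ≤ (∫ ω, phiErr (phat ω) ∂P) - phiErr p ∧
      (∫ ω, phiErr (phat ω) ∂P) - phiErr p ≤ 0) ∧
    (p ≠ 1 / 2 →
      -(p * (1 - p) / ((m : ℝ) * |2 * p - 1|)) ≤ (∫ ω, phiErr (phat ω) ∂P) - phiErr p ∧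
      (∫ ω, phiErr (phat ω) ∂P) - phiErr p ≤ 0) := by
  intro P phiErr phat
  have hq : (Real.toNNReal p : ℝ) = p := Real.coe_toNNReal p hp.1
  have hphat : phat = sampleMean fun b : Bool => if b then (1 : ℝ) else 0 := rfl
  have hmem : MemLp phat 2 P := .of_discrete
  have hmean : P[phat] = p := by
    rw [hphat, integral_sampleMean .of_finite hm.ne', PMF.integral_bernoulli_indicator, hq]
  have hvar : Var[phat; P] = p * (1 - p) / m := by
    rw [hphat, variance_sampleMean .of_discrete, PMF.variance_bernoulli_indicator, hq]
  have hupper : ∫ ω, phiErr (phat ω) ∂P ≤ phiErr p := by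
    simpa only [hmean] using integral_min_one_sub_le_s7 (hmem.integrable one_le_two)
  refine ⟨⟨?_, by linarith⟩, fun hhalf => ⟨?_, by linarith⟩⟩
  · have hlower : phiErr P[phat] - √(Var[phat; P]) ≤ ∫ ω, phiErr (phat ω) ∂P :=
      sub_sqrt_variance_le_integral_min_one_sub hmem
    rw [hmean, hvar] at hlower
    have hvar_le : p * (1 - p) / m ≤ Real.pi / (2 * m) := by
      rw [div_le_div_iff₀ (by positivity) (by positivity)]
      nlinarith [Real.pi_gt_three, sq_nonneg (2 * p - 1)]
    linarith [Real.sqrt_le_sqrt hvar_le]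
  · have hlower : phiErr P[phat] - Var[phat; P] / |2 * P[phat] - 1| ≤ ∫ ω, phiErr (phat ω) ∂P :=
      sub_variance_div_le_integral_min_one_sub hmem (hmean ▸ hhalf)
    rw [hmean, hvar, div_div] at hlower
    linarith
end

section
/- Fix p ∈ [2, ∞]. Let ξ, μ ∈ ℝ^n be arbitrary fixed vectors, K ⊂ ℝ^n a closed convex set, and suppose a point u ∈ K and positive numbers t, s satisfy Z(u, t) := sup{⟨ξ, v − u⟩ : v ∈ K, ‖v − u‖_p ≤ t} ≤ t²/2 + t·s. Then the Euclidean projection μ̂ of μ + ξ onto K satisfies ‖μ̂ − μ‖₂² ≤ ‖u − μ‖₂² + (t + s)². -/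
open scoped RealInnerProductSpace ENNReal

/-- The `p`-norm on `ℝ^n` for `p ∈ [1, ∞]` (with `p = ∞` giving the max norm). -/
noncomputable def pNorm {n : ℕ} (p : ℝ≥0∞) (v : EuclideanSpace ℝ (Fin n)) : ℝ :=
  if p = ∞ then ⨆ i, |v i| else (∑ i, |v i| ^ p.toReal) ^ (1 / p.toReal)

lemma abs_coord_le_norm {n : ℕ} (v : EuclideanSpace ℝ (Fin n)) (i : Fin n) :
    |v i| ≤ ‖v‖ := by
  rw [EuclideanSpace.norm_eq]
  have h1 : |v i| = Real.sqrt (|v i| ^ 2) := by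
    rw [Real.sqrt_sq_eq_abs, abs_abs]
  rw [h1]
  apply Real.sqrt_le_sqrt
  have := Finset.single_le_sum (f := fun j => ‖v j‖ ^ 2)
    (fun j _ => by positivity) (Finset.mem_univ i)
  simpa [Real.norm_eq_abs, sq_abs] using this

lemma pNorm_le_norm {n : ℕ} (p : ℝ≥0∞) (hp : 2 ≤ p) (v : EuclideanSpace ℝ (Fin n)) :
    pNorm p v ≤ ‖v‖ := by
  unfold pNorm
  split_ifs with h
  · exact Real.iSup_le (fun i => abs_coord_le_norm v i) (norm_nonneg v)
  · set q := p.toReal with hq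
    have hq2 : 2 ≤ q := by
      rw [hq]
      have : ((2 : ℝ≥0∞)).toReal ≤ p.toReal :=
        ENNReal.toReal_mono h hp
      simpa using this
    have hq0 : 0 < q := by linarith
    have hnorm_sq : ‖v‖ ^ (2 : ℝ) = ∑ i, |v i| ^ (2 : ℝ) := by
      have h2 : ‖v‖ ^ (2 : ℝ) = ‖v‖ ^ (2 : ℕ) := by
        rw [← Real.rpow_natCast] ; norm_num
      rw [h2, EuclideanSpace.norm_eq, Real.sq_sqrt (by positivity)]
      apply Finset.sum_congr rfl
      intro i _
      rw [← Real.rpow_natCast] ; norm_num [Real.norm_eq_abs]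
    have key : ∑ i, |v i| ^ q ≤ ‖v‖ ^ q := by
      have hsplit : ∀ i : Fin n, |v i| ^ q ≤ |v i| ^ (2 : ℝ) * ‖v‖ ^ (q - 2) := by
        intro i
        have habs : (0 : ℝ) ≤ |v i| := abs_nonneg _
        have h1 : |v i| ^ q = |v i| ^ (2 : ℝ) * |v i| ^ (q - 2) := by
          rw [← Real.rpow_add_of_nonneg habs (by norm_num) (by linarith)]
          norm_num
        rw [h1]
        apply mul_le_mul_of_nonneg_left _ (by positivity)
        exact Real.rpow_le_rpow habs (abs_coord_le_norm v i) (by linarith)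
      calc ∑ i, |v i| ^ q ≤ ∑ i, |v i| ^ (2 : ℝ) * ‖v‖ ^ (q - 2) :=
            Finset.sum_le_sum (fun i _ => hsplit i)
        _ = (∑ i, |v i| ^ (2 : ℝ)) * ‖v‖ ^ (q - 2) := by rw [Finset.sum_mul]
        _ = ‖v‖ ^ (2 : ℝ) * ‖v‖ ^ (q - 2) := by rw [hnorm_sq]
        _ = ‖v‖ ^ q := by
            rw [← Real.rpow_add_of_nonneg (norm_nonneg v) (by norm_num) (by linarith)]
            norm_num
    calc (∑ i, |v i| ^ q) ^ (1 / q) ≤ (‖v‖ ^ q) ^ (1 / q) :=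
          Real.rpow_le_rpow (Finset.sum_nonneg fun i _ => by positivity) key
            (by positivity)
      _ = ‖v‖ := by
          rw [← Real.rpow_mul (norm_nonneg v), mul_one_div, div_self hq0.ne', Real.rpow_one]

theorem localized_width_projection_bound
    {n : ℕ} (p : ℝ≥0∞) (hp : 2 ≤ p)
    (ξ μ : EuclideanSpace ℝ (Fin n))
    (K : Set (EuclideanSpace ℝ (Fin n))) (hKconv : Convex ℝ K) (hKclosed : IsClosed K)
    (u : EuclideanSpace ℝ (Fin n)) (hu : u ∈ K)
    (t s : ℝ) (ht : 0 < t) (hs : 0 < s)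
    (hZ : ∀ v ∈ K, pNorm p (v - u) ≤ t → ⟪ξ, v - u⟫ ≤ t ^ 2 / 2 + t * s)
    (muHat : EuclideanSpace ℝ (Fin n)) (hmem : muHat ∈ K)
    (hmin : ∀ v ∈ K, ‖(μ + ξ) - muHat‖ ^ 2 ≤ ‖(μ + ξ) - v‖ ^ 2) :
    ‖muHat - μ‖ ^ 2 ≤ ‖u - μ‖ ^ 2 + (t + s) ^ 2 := by
  set y := μ + ξ with hy
  -- variational inequality
  haveI : Nonempty K := ⟨⟨muHat, hmem⟩⟩
  have hinf : ‖y - muHat‖ = ⨅ w : K, ‖y - (w : EuclideanSpace ℝ (Fin n))‖ := by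
    apply le_antisymm
    · apply le_ciInf
      intro w
      have h := hmin w w.2
      exact (pow_le_pow_iff_left₀ (norm_nonneg _) (norm_nonneg _) (by norm_num)).mp h
    · exact ciInf_le ⟨0, fun x ⟨w, hw⟩ => hw ▸ norm_nonneg _⟩ (⟨muHat, hmem⟩ : K)
  have hvar : ∀ v ∈ K, ⟪y - muHat, v - muHat⟫ ≤ 0 :=
    (norm_eq_iInf_iff_real_inner_le_zero hKconv hmem).mp hinf
  -- key consequence: ⟪muHat - μ, muHat - u⟫ ≤ ⟪ξ, muHat - u⟫
  have hvu : ⟪muHat - μ, muHat - u⟫ ≤ ⟪ξ, muHat - u⟫ := by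
    have h := hvar u hu
    have h2 : ⟪y - muHat, u - muHat⟫ = ⟪muHat - μ, muHat - u⟫ - ⟪ξ, muHat - u⟫ := by
      rw [hy]
      have e1 : μ + ξ - muHat = ξ - (muHat - μ) := by abel
      have e2 : u - muHat = -(muHat - u) := by abel
      rw [e1, e2, inner_neg_right, inner_sub_left]
      ring
    rw [h2] at h
    linarith
  -- algebraic identity
  have hid : ‖muHat - μ‖ ^ 2 =
      ‖u - μ‖ ^ 2 + 2 * ⟪muHat - μ, muHat - u⟫ - ‖muHat - u‖ ^ 2 := by
    have hab : ‖(muHat - μ) - (muHat - u)‖ ^ 2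
        = ‖muHat - μ‖ ^ 2 - 2 * ⟪muHat - μ, muHat - u⟫ + ‖muHat - u‖ ^ 2 :=
      norm_sub_sq_real _ _
    have e : u - μ = (muHat - μ) - (muHat - u) := by abel
    rw [e, hab]
    ring
  set d := ‖muHat - u‖ with hd
  have hdnn : 0 ≤ d := norm_nonneg _
  have hmain : ‖muHat - μ‖ ^ 2 ≤ ‖u - μ‖ ^ 2 + 2 * ⟪ξ, muHat - u⟫ - d ^ 2 := by
    rw [hid]; linarith
  by_cases hcase : d ≤ t
  · -- small case: apply hZ directly to muHat
    have hpn : pNorm p (muHat - u) ≤ t :=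
      le_trans (pNorm_le_norm p hp _) hcase
    have hZm := hZ muHat hmem hpn
    nlinarith [sq_nonneg d, sq_nonneg s]
  · -- large case
    push_neg at hcase
    have hdpos : 0 < d := lt_trans ht hcase
    set v := u + (t / d) • (muHat - u) with hv
    have hvK : v ∈ K := by
      have hcoef : (0 : ℝ) ≤ t / d := by positivity
      have hcoef1 : t / d ≤ 1 := by
        rw [div_le_one hdpos]; linarith
      have := hKconv hu hmem (by linarith : (0:ℝ) ≤ 1 - t / d) hcoef (by ring)
      convert this using 1
      rw [hv]
      module
    have hvsub : v - u = (t / d) • (muHat - u) := by rw [hv]; abel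
    have hnv : ‖v - u‖ = t := by
      rw [hvsub, norm_smul, Real.norm_eq_abs, abs_of_nonneg (by positivity), ← hd]
      field_simp
    have hpn : pNorm p (v - u) ≤ t :=
      le_trans (pNorm_le_norm p hp _) (le_of_eq hnv)
    have hZv := hZ v hvK hpn
    rw [hvsub, real_inner_smul_right] at hZv
    -- so ⟪ξ, muHat - u⟫ ≤ d * (t/2 + s)
    have hIb : ⟪ξ, muHat - u⟫ ≤ d * (t / 2 + s) := by
      have h5 := mul_le_mul_of_nonneg_left hZv (le_of_lt (div_pos hdpos ht))
      have e1 : d / t * (t / d * ⟪ξ, muHat - u⟫) = ⟪ξ, muHat - u⟫ := by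
        field_simp
      have e2 : d / t * (t ^ 2 / 2 + t * s) = d * (t / 2 + s) := by
        field_simp
      rw [e1, e2] at h5
      exact h5
    nlinarith [sq_nonneg (d - (t / 2 + s)), sq_nonneg s, mul_pos ht hs]
end
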